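/- SandTrap attack (received by the target): Let A = Σ_{k∈V_R} W_{ik}(x_i + Clip(x_k − x_i, τ_i)) and C = Σ_{k∈V_R} W_{ik} Clip(x_k − x_i, τ_i). Suppose every Byzantine user b ∈ V_B sends to user i the vector x_b = x_i − A, and let W_B = Σ_{b∈V_B} W_{ib}. If ‖A‖ ≤ τ_i, then the aggregated update satisfies SCClip_i(x_1, …, x_n; τ_i) = x_i + C − W_B·A; i.e., the honest aggregate's contribution is partially subtracted, scaled by the Byzantine weight, preventing user i from converging with the rest of the network. -/
import Mathlib


open Finset

/-- Norm clipping: `Clip z τ = min 1 (τ/‖z‖) • z` (with `Clip 0 τ = 0`).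
Note `Clip z τ = z` whenever `‖z‖ ≤ τ`. -/
noncomputable def Clip {d : ℕ} (z : EuclideanSpace ℝ (Fin d)) (τ : ℝ) :
    EuclideanSpace ℝ (Fin d) :=
  (min 1 (τ / ‖z‖)) • z

/-- Self-centered clipping aggregation of user `i` (own vector `xi`) over
the user set `V` with weights `W` and radius `τ`:
`SCClip_i(x₁,…,xₙ; τ) = ∑_{j∈V} W_{ij} (x_i + Clip(x_j − x_i, τ))`. -/
noncomputable def SCClip {ι : Type*} {d : ℕ} (V : Finset ι) (W : ι → ℝ)
    (xi : EuclideanSpace ℝ (Fin d)) (x : ι → EuclideanSpace ℝ (Fin d)) (τ : ℝ) :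
    EuclideanSpace ℝ (Fin d) :=
  ∑ j ∈ V, W j • (xi + Clip (x j - xi) τ)

lemma Clip_of_le {d : ℕ} {z : EuclideanSpace ℝ (Fin d)} {τ : ℝ} (h : ‖z‖ ≤ τ) :
    Clip z τ = z := by
  unfold Clip
  rcases eq_or_ne z 0 with rfl | hz
  · simp
  · have hzpos : (0:ℝ) < ‖z‖ := norm_pos_iff.mpr hz
    have : (1:ℝ) ≤ τ / ‖z‖ := (one_le_div hzpos).mpr h
    rw [min_eq_left this, one_smul]

/-- SandTrap attack (received by the target): the honest aggregate's
contribution is partially subtracted, scaled by the Byzantine weight. -/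
theorem sandtrap_attack {ι : Type*} [DecidableEq ι] {d : ℕ} (V VR : Finset ι) (hVR : VR ⊆ V)
    (W : ι → ℝ) (hW0 : ∀ j ∈ V, 0 ≤ W j) (hW1 : ∑ j ∈ V, W j = 1)
    (i : ι) (hi : i ∈ VR) (τ : ℝ) (hτ : 0 ≤ τ)
    (x : ι → EuclideanSpace ℝ (Fin d))
    (A : EuclideanSpace ℝ (Fin d))
    (hA : A = ∑ k ∈ VR, W k • (x i + Clip (x k - x i) τ))
    (C : EuclideanSpace ℝ (Fin d)) (hC : C = ∑ k ∈ VR, W k • Clip (x k - x i) τ)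
    (WB : ℝ) (hWB : WB = ∑ b ∈ V \ VR, W b)
    (hsend : ∀ b ∈ V \ VR, x b = x i - A)
    (hnoclipB : ‖A‖ ≤ τ) :
    SCClip V W (x i) x τ = x i + C - WB • A := by
  unfold SCClip
  have hsplit : V = VR ∪ (V \ VR) := by
    rw [Finset.union_sdiff_of_subset hVR]
  have hxi : ∑ j ∈ V, W j • x i = x i := by
    rw [← Finset.sum_smul, hW1, one_smul]
  calc ∑ j ∈ V, W j • (x i + Clip (x j - x i) τ)
      = ∑ j ∈ V, W j • x i + ∑ j ∈ V, W j • Clip (x j - x i) τ := by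
        rw [← Finset.sum_add_distrib]; exact Finset.sum_congr rfl fun j _ => smul_add _ _ _
    _ = x i + (∑ j ∈ VR, W j • Clip (x j - x i) τ
          + ∑ j ∈ V \ VR, W j • Clip (x j - x i) τ) := by
        rw [hxi, ← Finset.sum_union Finset.disjoint_sdiff, Finset.union_sdiff_of_subset hVR]
    _ = x i + C - WB • A := by
        have hB : ∑ j ∈ V \ VR, W j • Clip (x j - x i) τ = -(WB • A) := by
          have : ∀ j ∈ V \ VR, W j • Clip (x j - x i) τ = W j • (-A) := by
            intro j hj
            rw [hsend j hj]
            have : x i - A - x i = -A := by abel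
            rw [this, Clip_of_le (by rwa [norm_neg])]
          rw [Finset.sum_congr rfl this, ← Finset.sum_smul, ← hWB, smul_neg]
        rw [hB, ← hC]
        abel
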